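/- If α, β : H ⊗ H → A are equivariant linear maps, then their convolution product α ∗ β : H ⊗ H → A is equivariant. -/

import Mathlib

open TensorProduct LinearMap

noncomputable section TwistedProducts

universe u

variable (k : Type u) [Field k]

/-- The convolution product `(f ∗ g)(x) = f(x₁) g(x₂)` of two linear maps from a
`k`-coalgebra `C` to a `k`-algebra `A`. -/
def conv {C A : Type u} [AddCommGroup C] [Module k C] [Coalgebra k C]
    [Ring A] [Algebra k A] (f g : C →ₗ[k] A) : C →ₗ[k] A :=
  LinearMap.mul' k A ∘ₗ TensorProduct.map f g ∘ₗ Coalgebra.comul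

/-- The unit `x ↦ ε(x)1` for the convolution product. -/
def convOne {C A : Type u} [AddCommGroup C] [Module k C] [Coalgebra k C]
    [Ring A] [Algebra k A] : C →ₗ[k] A :=
  Algebra.linearMap k A ∘ₗ Coalgebra.counit

variable (H : Type u) [Ring H] [HopfAlgebra k H]

/-- `H` is cocommutative: `comul` is invariant under the flip of the two tensor factors. -/
def IsCocommutative : Prop :=
  (TensorProduct.comm k H H).toLinearMap ∘ₗ Coalgebra.comul = (Coalgebra.comul : H →ₗ[k] H ⊗[k] H)

variable {R : Type u} [CommRing R] [Algebra k R]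

/-- The linear map `H ⊗ H ⊗ H →ₗ R`, `(h ⊗ g) ⊗ t ↦ σ(h₁ ⊗ g₁) σ(h₂g₂ ⊗ t)`
(the left-hand side of the cocycle identity, written in Sweedler notation). -/
def cocycleLHS (σ : H ⊗[k] H →ₗ[k] R) : (H ⊗[k] H) ⊗[k] H →ₗ[k] R :=
  LinearMap.mul' k R
    ∘ₗ TensorProduct.map σ (σ ∘ₗ TensorProduct.map (LinearMap.mul' k H) LinearMap.id)
    ∘ₗ (TensorProduct.assoc k (H ⊗[k] H) (H ⊗[k] H) H).toLinearMap
    ∘ₗ TensorProduct.map Coalgebra.comul LinearMap.id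

/-- The linear map `H ⊗ H ⊗ H →ₗ R`, `(h ⊗ g) ⊗ t ↦ σ(g₁ ⊗ t₁) σ(h ⊗ g₂t₂)`
(the right-hand side of the cocycle identity, written in Sweedler notation). -/
def cocycleRHS (σ : H ⊗[k] H →ₗ[k] R) : (H ⊗[k] H) ⊗[k] H →ₗ[k] R :=
  LinearMap.mul' k R
    ∘ₗ TensorProduct.map σ σ
    ∘ₗ (TensorProduct.leftComm k H (H ⊗[k] H) H).toLinearMap
    ∘ₗ TensorProduct.map LinearMap.id (TensorProduct.map LinearMap.id (LinearMap.mul' k H))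
    ∘ₗ TensorProduct.map LinearMap.id Coalgebra.comul
    ∘ₗ (TensorProduct.assoc k H H H).toLinearMap

/-- `σ : H ⊗ H → R` is a cocycle: it is convolution invertible, satisfies the cocycle
identity `σ(h₁ ⊗ g₁)σ(h₂g₂ ⊗ t) = σ(g₁ ⊗ t₁)σ(h ⊗ g₂t₂)` and is normalized:
`σ(h ⊗ 1) = σ(1 ⊗ h) = ε(h)1`. -/
def IsCocycle (σ : H ⊗[k] H →ₗ[k] R) : Prop :=
  (∃ σ' : H ⊗[k] H →ₗ[k] R, conv k σ σ' = convOne k ∧ conv k σ' σ = convOne k) ∧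
  cocycleLHS k H σ = cocycleRHS k H σ ∧
  ∀ h : H, σ (h ⊗ₜ (1 : H)) = algebraMap k R (Coalgebra.counit h) ∧
    σ ((1 : H) ⊗ₜ h) = algebraMap k R (Coalgebra.counit h)

/-- The twisted multiplication on `R ⊗ H`:
`(a ⊗ g) ⊗ (b ⊗ h) ↦ a b σ(h₁ ⊗ g₁) ⊗ h₂ g₂` (Sweedler notation), as a linear map
`(R ⊗ H) ⊗ (R ⊗ H) →ₗ R ⊗ H`. -/
def twistedMul (σ : H ⊗[k] H →ₗ[k] R) : (R ⊗[k] H) ⊗[k] (R ⊗[k] H) →ₗ[k] R ⊗[k] H :=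
  TensorProduct.map (LinearMap.mul' k R) LinearMap.id
    ∘ₗ (TensorProduct.assoc k R R H).symm.toLinearMap
    ∘ₗ TensorProduct.map (LinearMap.mul' k R)
        (TensorProduct.map σ (LinearMap.mul' k H))
    ∘ₗ TensorProduct.map LinearMap.id Coalgebra.comul
    ∘ₗ TensorProduct.map LinearMap.id (TensorProduct.comm k H H).toLinearMap
    ∘ₗ (TensorProduct.tensorTensorTensorComm k R H R H).toLinearMap

/-- The linear endomorphism of `H ⊗ H` given in Sweedler notation by
`a ⊗ b ↦ (a₁ b S(a₂)) ⊗ a₃`. -/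
def adjointTwist : H ⊗[k] H →ₗ[k] H ⊗[k] H :=
  TensorProduct.map
      (LinearMap.mul' k H ∘ₗ TensorProduct.map (LinearMap.mul' k H) LinearMap.id)
      LinearMap.id
    ∘ₗ (TensorProduct.assoc k (H ⊗[k] H) H H).symm.toLinearMap
    ∘ₗ TensorProduct.map LinearMap.id (TensorProduct.map (HopfAlgebra.antipode k) LinearMap.id)
    ∘ₗ (TensorProduct.tensorTensorTensorComm k H H H H).toLinearMap
    ∘ₗ TensorProduct.map LinearMap.id (TensorProduct.comm k H H).toLinearMap
    ∘ₗ (TensorProduct.assoc k (H ⊗[k] H) H H).toLinearMap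
    ∘ₗ TensorProduct.map (TensorProduct.map Coalgebra.comul LinearMap.id) LinearMap.id
    ∘ₗ TensorProduct.map Coalgebra.comul LinearMap.id

/-- A linear map `α : H ⊗ H → A` is *equivariant* if `α(a ⊗ b) = α(a₁ b S(a₂) ⊗ a₃)`
for all `a, b ∈ H` (Sweedler notation). -/
def IsEquivariant {A : Type u} [AddCommGroup A] [Module k A]
    (α : H ⊗[k] H →ₗ[k] A) : Prop :=
  α ∘ₗ adjointTwist k H = α

end TwistedProducts

noncomputable section ConvAux
universe u
open Coalgebra
variable {k : Type u} [Field k]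
variable {C : Type u} [AddCommGroup C] [Module k C] [Coalgebra k C]
variable {A : Type u} [Ring A] [Algebra k A]

lemma conv_apply {ι : Type*} (f g : C →ₗ[k] A) {a : C} (r : Coalgebra.Repr k a ι) :
    conv k f g a = ∑ i ∈ r.index, f (r.left i) * g (r.right i) := by
  simp only [conv, LinearMap.comp_apply, ← r.eq, map_sum, TensorProduct.map_tmul,
    LinearMap.mul'_apply]

lemma convOne_apply (a : C) : convOne k (A := A) a = algebraMap k A (counit a) := rfl

lemma counit_smul_left {ι : Type*} {a : C} (r : Coalgebra.Repr k a ι) :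
    ∑ i ∈ r.index, counit (R := k) (r.right i) • r.left i = a := by
  have := Coalgebra.sum_tmul_counit_eq (R := k) r
  have h2 := congrArg (TensorProduct.rid k C) this
  simp only [map_sum, TensorProduct.rid_tmul, one_smul] at h2
  exact h2

lemma counit_smul_right {ι : Type*} {a : C} (r : Coalgebra.Repr k a ι) :
    ∑ i ∈ r.index, counit (R := k) (r.left i) • r.right i = a := by
  have := Coalgebra.sum_counit_tmul_eq (R := k) r
  have h2 := congrArg (TensorProduct.lid k C) this
  simp only [map_sum, TensorProduct.lid_tmul, one_smul] at h2
  exact h2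

lemma conv_assoc (f g h : C →ₗ[k] A) :
    conv k (conv k f g) h = conv k f (conv k g h) := by
  apply LinearMap.ext; intro a
  set r := ℛ k a with hr
  set r1 : ∀ i : r.ι, Coalgebra.Repr k (r.left i) (C × C) := fun i => ℛ k (r.left i) with hr1
  set r2 : ∀ i : r.ι, Coalgebra.Repr k (r.right i) (C × C) := fun i => ℛ k (r.right i) with hr2
  rw [conv_apply (conv k f g) h r, conv_apply f (conv k g h) r]
  have key := Coalgebra.sum_map_tmul_tmul_eq (R := k) f g h a (repr := r) (a₁ := r1) (a₂ := r2)
  have key2 := congrArg (LinearMap.mul' k A ∘ₗ LinearMap.lTensor A (LinearMap.mul' k A)) key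
  simp only [map_sum, LinearMap.comp_apply, LinearMap.lTensor_tmul, LinearMap.mul'_apply] at key2
  calc ∑ i ∈ r.index, conv k f g (r.left i) * h (r.right i)
      = ∑ i ∈ r.index, ∑ j ∈ (r1 i).index,
          f ((r1 i).left j) * (g ((r1 i).right j) * h (r.right i)) := by
        refine Finset.sum_congr rfl fun i _ => ?_
        rw [conv_apply f g (r1 i), Finset.sum_mul]
        exact Finset.sum_congr rfl fun j _ => by rw [mul_assoc]
    _ = ∑ i ∈ r.index, ∑ j ∈ (r2 i).index,
          f (r.left i) * (g ((r2 i).left j) * h ((r2 i).right j)) := key2.symm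
    _ = ∑ i ∈ r.index, f (r.left i) * conv k g h (r.right i) := by
        refine Finset.sum_congr rfl fun i _ => ?_
        rw [conv_apply g h (r2 i), Finset.mul_sum]

lemma conv_convOne (f : C →ₗ[k] A) : conv k f (convOne k) = f := by
  apply LinearMap.ext; intro a
  set r := ℛ k a with hr
  rw [conv_apply f (convOne k) r]
  calc ∑ i ∈ r.index, f (r.left i) * convOne k (r.right i)
      = ∑ i ∈ r.index, f (counit (R := k) (r.right i) • r.left i) := by
        refine Finset.sum_congr rfl fun i _ => ?_
        rw [_root_.convOne_apply, map_smul, ← Algebra.commutes, ← Algebra.smul_def]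
    _ = f a := by rw [← map_sum, counit_smul_left r]

lemma convOne_conv (f : C →ₗ[k] A) : conv k (convOne k) f = f := by
  apply LinearMap.ext; intro a
  set r := ℛ k a with hr
  rw [conv_apply (convOne k) f r]
  calc ∑ i ∈ r.index, convOne k (r.left i) * f (r.right i)
      = ∑ i ∈ r.index, f (counit (R := k) (r.left i) • r.right i) := by
        refine Finset.sum_congr rfl fun i _ => ?_
        rw [_root_.convOne_apply, map_smul, ← Algebra.smul_def]
    _ = f a := by rw [← map_sum, counit_smul_right r]

lemma comp_conv {A' : Type u} [Ring A'] [Algebra k A'] (F : A →ₗ[k] A')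
    (hF : ∀ x y, F (x * y) = F x * F y) (f g : C →ₗ[k] A) :
    F ∘ₗ conv k f g = conv k (F ∘ₗ f) (F ∘ₗ g) := by
  apply LinearMap.ext; intro a
  set r := ℛ k a with hr
  rw [LinearMap.comp_apply, conv_apply f g r, conv_apply (F ∘ₗ f) (F ∘ₗ g) r, map_sum]
  exact Finset.sum_congr rfl fun i _ => by rw [hF]; rfl

lemma conv_comp {C' : Type u} [AddCommGroup C'] [Module k C'] [Coalgebra k C']
    (f g : C →ₗ[k] A) (φ : C' →ₗ[k] C)
    (hφ : Coalgebra.comul ∘ₗ φ = TensorProduct.map φ φ ∘ₗ Coalgebra.comul) :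
    conv k f g ∘ₗ φ = conv k (f ∘ₗ φ) (g ∘ₗ φ) := by
  apply LinearMap.ext; intro a
  have h1 : comul (R := k) (φ a) = TensorProduct.map φ φ (comul a) := LinearMap.congr_fun hφ a
  simp only [conv, LinearMap.comp_apply]
  rw [h1, show TensorProduct.map f g (TensorProduct.map φ φ (comul (R := k) a))
      = TensorProduct.map (f ∘ₗ φ) (g ∘ₗ φ) (comul (R := k) a) from by
    rw [TensorProduct.map_comp]; rfl]

lemma conv_comm_of
    (hC : (TensorProduct.comm k C C).toLinearMap ∘ₗ Coalgebra.comul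
        = (Coalgebra.comul : C →ₗ[k] C ⊗[k] C))
    (f g : C →ₗ[k] A) (hfg : ∀ x y, Commute (f x) (g y)) :
    conv k f g = conv k g f := by
  apply LinearMap.ext; intro a
  set r := ℛ k a with hr
  have hflip : ∑ i ∈ r.index, r.right i ⊗ₜ[k] r.left i = CoalgebraStruct.comul (R := k) a := by
    have h1 : (TensorProduct.comm k C C).toLinearMap (comul (R := k) a) = comul a :=
      LinearMap.congr_fun hC a
    rw [← r.eq] at h1
    simp only [map_sum, LinearEquiv.coe_coe, TensorProduct.comm_tmul] at h1
    exact h1.trans r.eq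
  set r' : Coalgebra.Repr k a (C × C) := ⟨r.index, r.right, r.left, hflip⟩ with hr'
  rw [conv_apply f g r, conv_apply g f r']
  exact Finset.sum_congr rfl fun i _ => (hfg (r.left i) (r.right i)).eq

lemma commute_conv_left {f g : C →ₗ[k] A} {h : C →ₗ[k] A}
    (hf : ∀ x y, Commute (f x) (h y)) (hg : ∀ x y, Commute (g x) (h y)) :
    ∀ x y, Commute (conv k f g x) (h y) := by
  intro x y
  rw [conv_apply f g (ℛ k x)]
  exact Commute.sum_left _ _ _ fun i _ => (hf _ _).mul_left (hg _ _)

/-- exchange law -/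
lemma conv_exchange
    (hC : (TensorProduct.comm k C C).toLinearMap ∘ₗ Coalgebra.comul
        = (Coalgebra.comul : C →ₗ[k] C ⊗[k] C))
    (u1 u2 v1 v2 : C →ₗ[k] A) (h : ∀ x y, Commute (u2 x) (v1 y)) :
    conv k (conv k u1 u2) (conv k v1 v2) = conv k (conv k u1 v1) (conv k u2 v2) := by
  rw [conv_assoc u1 u2 (conv k v1 v2), ← conv_assoc u2 v1 v2,
    conv_comm_of hC u2 v1 h, conv_assoc v1 u2 v2, ← conv_assoc u1 v1 (conv k u2 v2)]

end ConvAux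

noncomputable section HopfAux
universe u
open Coalgebra
variable {k : Type u} [Field k]

section JDefs
variable {B : Type u} [Ring B] [Algebra k B]

/-- `x ↦ x ⊗ 1`. -/
def jL : B →ₗ[k] B ⊗[k] B := (TensorProduct.mk k B B).flip 1
/-- `x ↦ 1 ⊗ x`. -/
def jR : B →ₗ[k] B ⊗[k] B := TensorProduct.mk k B B 1

@[simp] lemma jL_apply (x : B) : jL (k := k) x = x ⊗ₜ[k] 1 := rfl
@[simp] lemma jR_apply (x : B) : jR (k := k) x = (1 : B) ⊗ₜ[k] x := rfl

lemma jL_mul (x y : B) : jL (k := k) (x * y) = jL (k := k) x * jL (k := k) y := by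
  simp [Algebra.TensorProduct.tmul_mul_tmul]

lemma jR_mul (x y : B) : jR (k := k) (x * y) = jR (k := k) x * jR (k := k) y := by
  simp [Algebra.TensorProduct.tmul_mul_tmul]

lemma commute_jL_jR (x y : B) : Commute (jL (k := k) x) (jR (k := k) y) := by
  show _ * _ = _ * _
  simp [Algebra.TensorProduct.tmul_mul_tmul]

end JDefs

section PDefs
variable {C : Type u} [AddCommGroup C] [Module k C] [Coalgebra k C]

/-- `x ⊗ y ↦ ε(y) x`. -/
def pL : C ⊗[k] C →ₗ[k] C :=
  (TensorProduct.rid k C).toLinearMap ∘ₗ LinearMap.lTensor C (Coalgebra.counit (R := k))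
/-- `x ⊗ y ↦ ε(x) y`. -/
def pR : C ⊗[k] C →ₗ[k] C :=
  (TensorProduct.lid k C).toLinearMap ∘ₗ LinearMap.rTensor C (Coalgebra.counit (R := k))

@[simp] lemma pL_tmul (x y : C) : pL (k := k) (x ⊗ₜ[k] y) = counit (R := k) y • x := by
  simp [pL]
@[simp] lemma pR_tmul (x y : C) : pR (k := k) (x ⊗ₜ[k] y) = counit (R := k) x • y := by
  simp [pR]

lemma comul_tmul_repr {ι κ : Type*} {a b : C} (ra : Coalgebra.Repr k a ι) (rb : Coalgebra.Repr k b κ) :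
    comul (R := k) (a ⊗ₜ[k] b) = ∑ i ∈ ra.index, ∑ j ∈ rb.index,
      (ra.left i ⊗ₜ[k] rb.left j) ⊗ₜ[k] (ra.right i ⊗ₜ[k] rb.right j) := by
  have h0 : comul (R := k) (a ⊗ₜ[k] b)
      = TensorProduct.tensorTensorTensorComm k C C C C
          (comul (R := k) a ⊗ₜ[k] comul (R := k) b) := rfl
  rw [h0, ← ra.eq, ← rb.eq]
  rw [TensorProduct.sum_tmul]
  rw [map_sum]
  refine Finset.sum_congr rfl fun i _ => ?_
  rw [TensorProduct.tmul_sum, map_sum]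
  refine Finset.sum_congr rfl fun j _ => ?_
  simp [TensorProduct.tensorTensorTensorComm_tmul]

lemma counit_prod_eq {ι : Type*} {b : C} (rb : Coalgebra.Repr k b ι) :
    ∑ j ∈ rb.index, counit (R := k) (rb.left j) * counit (R := k) (rb.right j)
      = counit (R := k) b := by
  have := congrArg (counit (R := k)) (counit_smul_right (k := k) rb)
  simpa [map_sum, smul_eq_mul] using this

lemma comul_comp_pL :
    (Coalgebra.comul (R := k)) ∘ₗ pL (k := k) (C := C)
      = TensorProduct.map (pL (k := k)) (pL (k := k)) ∘ₗ Coalgebra.comul := by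
  apply TensorProduct.ext'; intro a b
  set ra := ℛ k a; set rb := ℛ k b
  rw [LinearMap.comp_apply, LinearMap.comp_apply, comul_tmul_repr ra rb]
  simp only [map_sum]
  calc comul (R := k) (pL (a ⊗ₜ[k] b)) = counit (R := k) b • comul (R := k) a := by
        rw [pL_tmul, map_smul]
    _ = ∑ j ∈ rb.index, (counit (R := k) (rb.left j) * counit (R := k) (rb.right j)) •
          ∑ i ∈ ra.index, ra.left i ⊗ₜ[k] ra.right i := by
        rw [← Finset.sum_smul, counit_prod_eq rb, ra.eq]
    _ = ∑ i ∈ ra.index, ∑ j ∈ rb.index, TensorProduct.map (pL (k := k)) (pL (k := k))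
          ((ra.left i ⊗ₜ[k] rb.left j) ⊗ₜ[k] (ra.right i ⊗ₜ[k] rb.right j)) := by
        rw [Finset.sum_comm]
        refine Finset.sum_congr rfl fun j _ => ?_
        rw [Finset.smul_sum]
        refine Finset.sum_congr rfl fun i _ => ?_
        simp only [TensorProduct.map_tmul, pL_tmul, TensorProduct.smul_tmul',
          TensorProduct.tmul_smul, smul_smul, mul_comm]

lemma comul_comp_pR :
    (Coalgebra.comul (R := k)) ∘ₗ pR (k := k) (C := C)
      = TensorProduct.map (pR (k := k)) (pR (k := k)) ∘ₗ Coalgebra.comul := by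
  apply TensorProduct.ext'; intro a b
  set ra := ℛ k a; set rb := ℛ k b
  rw [LinearMap.comp_apply, LinearMap.comp_apply, comul_tmul_repr ra rb]
  simp only [map_sum]
  calc comul (R := k) (pR (a ⊗ₜ[k] b)) = counit (R := k) a • comul (R := k) b := by
        rw [pR_tmul, map_smul]
    _ = ∑ i ∈ ra.index, (counit (R := k) (ra.left i) * counit (R := k) (ra.right i)) •
          ∑ j ∈ rb.index, rb.left j ⊗ₜ[k] rb.right j := by
        rw [← Finset.sum_smul, counit_prod_eq ra, rb.eq]
    _ = ∑ i ∈ ra.index, ∑ j ∈ rb.index, TensorProduct.map (pR (k := k)) (pR (k := k))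
          ((ra.left i ⊗ₜ[k] rb.left j) ⊗ₜ[k] (ra.right i ⊗ₜ[k] rb.right j)) := by
        refine Finset.sum_congr rfl fun i _ => ?_
        rw [Finset.smul_sum]
        refine Finset.sum_congr rfl fun j _ => ?_
        simp only [TensorProduct.map_tmul, pR_tmul, TensorProduct.smul_tmul',
          TensorProduct.tmul_smul, smul_smul, mul_comm]

lemma flip_repr_eq
    (hcc : (TensorProduct.comm k C C).toLinearMap ∘ₗ Coalgebra.comul
        = (Coalgebra.comul : C →ₗ[k] C ⊗[k] C))
    {ι : Type*} {a : C} (r : Coalgebra.Repr k a ι) :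
    ∑ i ∈ r.index, r.right i ⊗ₜ[k] r.left i = CoalgebraStruct.comul (R := k) a := by
  have h1 : (TensorProduct.comm k C C).toLinearMap (comul (R := k) a) = comul a :=
    LinearMap.congr_fun hcc a
  rw [← r.eq] at h1
  simp only [map_sum, LinearEquiv.coe_coe, TensorProduct.comm_tmul] at h1
  exact h1.trans r.eq

/-- Cocommutativity passes to the tensor square. -/
lemma comm_comp_comul_tensor
    (hcc : (TensorProduct.comm k C C).toLinearMap ∘ₗ Coalgebra.comul
        = (Coalgebra.comul : C →ₗ[k] C ⊗[k] C)) :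
    (TensorProduct.comm k (C ⊗[k] C) (C ⊗[k] C)).toLinearMap ∘ₗ Coalgebra.comul
      = (Coalgebra.comul : C ⊗[k] C →ₗ[k] (C ⊗[k] C) ⊗[k] (C ⊗[k] C)) := by
  apply TensorProduct.ext'; intro a b
  set ra := ℛ k a; set rb := ℛ k b
  set ra' : Coalgebra.Repr k a (C × C) := ⟨ra.index, ra.right, ra.left, flip_repr_eq hcc ra⟩
  set rb' : Coalgebra.Repr k b (C × C) := ⟨rb.index, rb.right, rb.left, flip_repr_eq hcc rb⟩
  rw [LinearMap.comp_apply]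
  nth_rewrite 1 [comul_tmul_repr ra rb]
  rw [comul_tmul_repr ra' rb']
  simp only [map_sum, LinearEquiv.coe_coe, TensorProduct.comm_tmul]
  rfl

end PDefs
end HopfAux

noncomputable section AntipodeAux
universe u
open Coalgebra
variable {k : Type u} [Field k] {H : Type u} [Ring H] [HopfAlgebra k H]

local notation "𝑆" => (HopfAlgebra.antipode (R := k) (A := H))

lemma comul_eq_conv :
    (Coalgebra.comul : H →ₗ[k] H ⊗[k] H) = conv k (jL (k := k)) (jR (k := k)) := by
  apply LinearMap.ext; intro a
  set r := ℛ k a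
  rw [conv_apply _ _ r, ← r.eq]
  exact Finset.sum_congr rfl fun i _ => by
    simp [Algebra.TensorProduct.tmul_mul_tmul]

lemma mapSS_eq_conv :
    TensorProduct.map 𝑆 𝑆 ∘ₗ (Coalgebra.comul : H →ₗ[k] H ⊗[k] H)
      = conv k (jL (k := k) ∘ₗ 𝑆) (jR (k := k) ∘ₗ 𝑆) := by
  apply LinearMap.ext; intro a
  set r := ℛ k a
  rw [LinearMap.comp_apply, conv_apply _ _ r, ← r.eq, map_sum]
  exact Finset.sum_congr rfl fun i _ => by
    simp [Algebra.TensorProduct.tmul_mul_tmul]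

lemma one_tmul_algebraMap (c : k) :
    (1 : H) ⊗ₜ[k] (algebraMap k H c) = algebraMap k (H ⊗[k] H) c := by
  rw [Algebra.TensorProduct.algebraMap_apply]
  rw [Algebra.algebraMap_eq_smul_one]
  rw [TensorProduct.tmul_smul, TensorProduct.smul_tmul']

lemma conv_jL_jLS :
    conv k (jL (k := k) (B := H)) (jL (k := k) ∘ₗ 𝑆) = convOne k := by
  apply LinearMap.ext; intro a
  set r := ℛ k a
  rw [conv_apply _ _ r, _root_.convOne_apply]
  calc ∑ i ∈ r.index, jL (k := k) (r.left i) * (jL (k := k) ∘ₗ 𝑆) (r.right i)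
      = ∑ i ∈ r.index, (r.left i * 𝑆 (r.right i)) ⊗ₜ[k] (1 : H) := by
        exact Finset.sum_congr rfl fun i _ => by
          simp [Algebra.TensorProduct.tmul_mul_tmul]
    _ = (∑ i ∈ r.index, r.left i * 𝑆 (r.right i)) ⊗ₜ[k] (1 : H) := by
        rw [TensorProduct.sum_tmul]
    _ = algebraMap k H (counit a) ⊗ₜ[k] (1 : H) := by
        rw [HopfAlgebra.sum_mul_antipode_eq_algebraMap_counit r]
    _ = algebraMap k (H ⊗[k] H) (counit a) := by
        rw [Algebra.TensorProduct.algebraMap_apply]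

lemma conv_jR_jRS :
    conv k (jR (k := k) (B := H)) (jR (k := k) ∘ₗ 𝑆) = convOne k := by
  apply LinearMap.ext; intro a
  set r := ℛ k a
  rw [conv_apply _ _ r, _root_.convOne_apply]
  calc ∑ i ∈ r.index, jR (k := k) (r.left i) * (jR (k := k) ∘ₗ 𝑆) (r.right i)
      = ∑ i ∈ r.index, (1 : H) ⊗ₜ[k] (r.left i * 𝑆 (r.right i)) := by
        exact Finset.sum_congr rfl fun i _ => by
          simp [Algebra.TensorProduct.tmul_mul_tmul]
    _ = (1 : H) ⊗ₜ[k] (∑ i ∈ r.index, r.left i * 𝑆 (r.right i)) := by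
        rw [TensorProduct.tmul_sum]
    _ = (1 : H) ⊗ₜ[k] algebraMap k H (counit a) := by
        rw [HopfAlgebra.sum_mul_antipode_eq_algebraMap_counit r]
    _ = algebraMap k (H ⊗[k] H) (counit a) := one_tmul_algebraMap _

lemma conv_comulS_comul :
    conv k ((Coalgebra.comul : H →ₗ[k] H ⊗[k] H) ∘ₗ 𝑆) Coalgebra.comul = convOne k := by
  apply LinearMap.ext; intro a
  set r := ℛ k a
  rw [conv_apply _ _ r, _root_.convOne_apply]
  calc ∑ i ∈ r.index, (Coalgebra.comul ∘ₗ 𝑆) (r.left i) * comul (R := k) (r.right i)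
      = ∑ i ∈ r.index, comul (R := k) (𝑆 (r.left i) * r.right i) := by
        exact Finset.sum_congr rfl fun i _ => by
          rw [LinearMap.comp_apply, Bialgebra.comul_mul]
    _ = comul (R := k) (∑ i ∈ r.index, 𝑆 (r.left i) * r.right i) := by rw [map_sum]
    _ = comul (R := k) (algebraMap k H (counit a)) := by
        rw [HopfAlgebra.sum_antipode_mul_eq_algebraMap_counit r]
    _ = algebraMap k (H ⊗[k] H) (counit a) := by rw [Bialgebra.comul_algebraMap]

lemma commute_jR_jLS (x y : H) :
    Commute (jR (k := k) x) ((jL (k := k) ∘ₗ 𝑆) y) := by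
  show _ * _ = _ * _
  simp [Algebra.TensorProduct.tmul_mul_tmul]

lemma comul_comp_antipode
    (hcc : (TensorProduct.comm k H H).toLinearMap ∘ₗ Coalgebra.comul
        = (Coalgebra.comul : H →ₗ[k] H ⊗[k] H)) :
    (Coalgebra.comul : H →ₗ[k] H ⊗[k] H) ∘ₗ 𝑆 = TensorProduct.map 𝑆 𝑆 ∘ₗ Coalgebra.comul := by
  have h4 : conv k (Coalgebra.comul : H →ₗ[k] H ⊗[k] H)
      (TensorProduct.map 𝑆 𝑆 ∘ₗ Coalgebra.comul) = convOne k := by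
    rw [mapSS_eq_conv]
    nth_rewrite 1 [comul_eq_conv]
    rw [conv_assoc, ← conv_assoc (jR (k := k)) (jL (k := k) ∘ₗ 𝑆) (jR (k := k) ∘ₗ 𝑆),
      conv_comm_of hcc (jR (k := k)) (jL (k := k) ∘ₗ 𝑆) commute_jR_jLS,
      conv_assoc (jL (k := k) ∘ₗ 𝑆) (jR (k := k)) (jR (k := k) ∘ₗ 𝑆),
      conv_jR_jRS, conv_convOne]
    exact conv_jL_jLS
  calc (Coalgebra.comul : H →ₗ[k] H ⊗[k] H) ∘ₗ 𝑆
      = conv k (Coalgebra.comul ∘ₗ 𝑆) (convOne k) := (conv_convOne _).symm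
    _ = conv k (Coalgebra.comul ∘ₗ 𝑆)
        (conv k Coalgebra.comul (TensorProduct.map 𝑆 𝑆 ∘ₗ Coalgebra.comul)) := by rw [h4]
    _ = conv k (conv k (Coalgebra.comul ∘ₗ 𝑆) Coalgebra.comul)
        (TensorProduct.map 𝑆 𝑆 ∘ₗ Coalgebra.comul) := (conv_assoc _ _ _).symm
    _ = conv k (convOne k) (TensorProduct.map 𝑆 𝑆 ∘ₗ Coalgebra.comul) := by
        rw [conv_comulS_comul]
    _ = TensorProduct.map 𝑆 𝑆 ∘ₗ Coalgebra.comul := convOne_conv _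

end AntipodeAux

noncomputable section MoreAux
universe u
open Coalgebra
variable {k : Type u} [Field k]

/-- A `Repr` of `1` in a bialgebra. -/
def oneRepr (B : Type u) [Ring B] [Bialgebra k B] :
    Coalgebra.Repr k (1 : B) Unit :=
  ⟨(Finset.univ : Finset Unit), fun _ => 1, fun _ => 1, by
    simp [Bialgebra.comul_one, Algebra.TensorProduct.one_def]⟩

section E4
variable {C : Type u} [AddCommGroup C] [Module k C] [Coalgebra k C]
variable {B : Type u} [Ring B] [Algebra k B]

lemma map_comp_comul_eq_conv (u v : C →ₗ[k] B) :
    TensorProduct.map u v ∘ₗ (Coalgebra.comul : C →ₗ[k] C ⊗[k] C)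
      = conv k (jL (k := k) ∘ₗ u) (jR (k := k) ∘ₗ v) := by
  apply LinearMap.ext; intro a
  set r := ℛ k a
  rw [LinearMap.comp_apply, conv_apply _ _ r, ← r.eq, map_sum]
  exact Finset.sum_congr rfl fun i _ => by
    simp [Algebra.TensorProduct.tmul_mul_tmul]

lemma conv_tmul (u v : C ⊗[k] C →ₗ[k] B) (a b : C)
    {ι κ : Type*} (ra : Coalgebra.Repr k a ι) (rb : Coalgebra.Repr k b κ) :
    conv k u v (a ⊗ₜ[k] b) = ∑ i ∈ ra.index, ∑ j ∈ rb.index,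
      u (ra.left i ⊗ₜ[k] rb.left j) * v (ra.right i ⊗ₜ[k] rb.right j) := by
  simp only [conv, LinearMap.comp_apply]
  rw [comul_tmul_repr ra rb]
  simp only [map_sum, TensorProduct.map_tmul, LinearMap.mul'_apply]

end E4

section ComulM
variable {B : Type u} [Ring B] [Bialgebra k B]

lemma comul_comp_jL :
    (Coalgebra.comul : B ⊗[k] B →ₗ[k] (B ⊗[k] B) ⊗[k] (B ⊗[k] B)) ∘ₗ jL (k := k)
      = conv k (jL (k := k) ∘ₗ jL (k := k)) (jR (k := k) ∘ₗ jL (k := k)) := by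
  apply LinearMap.ext; intro a
  set r := ℛ k a
  rw [LinearMap.comp_apply, conv_apply _ _ r, jL_apply,
    comul_tmul_repr r (oneRepr B)]
  simp only [oneRepr, Finset.sum_const, Finset.card_univ, Fintype.card_unit, one_smul]
  exact Finset.sum_congr rfl fun i _ => by
    simp [Algebra.TensorProduct.tmul_mul_tmul]

lemma comul_comp_jR :
    (Coalgebra.comul : B ⊗[k] B →ₗ[k] (B ⊗[k] B) ⊗[k] (B ⊗[k] B)) ∘ₗ jR (k := k)
      = conv k (jL (k := k) ∘ₗ jR (k := k)) (jR (k := k) ∘ₗ jR (k := k)) := by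
  apply LinearMap.ext; intro a
  set r := ℛ k a
  rw [LinearMap.comp_apply, conv_apply _ _ r, jR_apply,
    comul_tmul_repr (oneRepr B) r]
  simp only [oneRepr, Finset.univ_unique, Finset.sum_singleton]
  exact Finset.sum_congr rfl fun i _ => by
    simp [Algebra.TensorProduct.tmul_mul_tmul]

end ComulM
end MoreAux

noncomputable section MainAux
universe u
open Coalgebra
variable {k : Type u} [Field k] {H : Type u} [Ring H] [HopfAlgebra k H]

local notation "𝑆" => (HopfAlgebra.antipode (R := k) (A := H))

/-- helper: pull a counit-weighted sum out of the middle of a triple product. -/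
lemma sum_smul_mid {ι : Type*} (s : Finset ι) (c : ι → k) (y : ι → H) (x z v : H) :
    ∑ i ∈ s, c i • ((x * y i * z) ⊗ₜ[k] v)
      = (x * (∑ i ∈ s, c i • y i) * z) ⊗ₜ[k] v := by
  rw [Finset.mul_sum, Finset.sum_mul, TensorProduct.sum_tmul]
  exact Finset.sum_congr rfl fun i _ => by
    rw [mul_smul_comm, smul_mul_assoc, TensorProduct.smul_tmul']

lemma sum_mul_collapse {ι κ : Type*} (s : Finset ι) (t : Finset κ)
    (c : ι → k) (d : κ → k) (y : ι → H) (z : κ → H) :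
    ∑ i ∈ s, ∑ j ∈ t, (c i * d j) • ((y i * z j) ⊗ₜ[k] (1 : H))
      = ((∑ i ∈ s, c i • y i) * (∑ j ∈ t, d j • z j)) ⊗ₜ[k] (1 : H) := by
  rw [Finset.sum_mul_sum, TensorProduct.sum_tmul]
  refine Finset.sum_congr rfl fun i _ => ?_
  rw [TensorProduct.sum_tmul]
  refine Finset.sum_congr rfl fun j _ => ?_
  rw [smul_mul_smul_comm]
  simp [TensorProduct.smul_tmul']

lemma atom1_tmul (x y : H) :
    (jL (k := k) ∘ₗ pL (k := k)) (x ⊗ₜ[k] y) = counit (R := k) y • (x ⊗ₜ[k] (1 : H)) := by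
  simp [TensorProduct.smul_tmul']
lemma atom2_tmul (x y : H) :
    (jL (k := k) ∘ₗ pR (k := k)) (x ⊗ₜ[k] y) = counit (R := k) x • (y ⊗ₜ[k] (1 : H)) := by
  simp [TensorProduct.smul_tmul']
lemma atom3_tmul (x y : H) :
    (jL (k := k) ∘ₗ (𝑆 ∘ₗ pL (k := k))) (x ⊗ₜ[k] y)
      = counit (R := k) y • (𝑆 x ⊗ₜ[k] (1 : H)) := by
  simp [TensorProduct.smul_tmul']
lemma atom4_tmul (x y : H) :
    (jR (k := k) ∘ₗ pL (k := k)) (x ⊗ₜ[k] y) = counit (R := k) y • ((1 : H) ⊗ₜ[k] x) := by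
  simp

set_option maxHeartbeats 1000000 in
lemma adjointTwist_eq_conv :
    adjointTwist k H
      = conv k (conv k (conv k (jL (k := k) ∘ₗ pL (k := k)) (jL (k := k) ∘ₗ pR (k := k)))
          (jL (k := k) ∘ₗ (𝑆 ∘ₗ pL (k := k)))) (jR (k := k) ∘ₗ pL (k := k)) := by
  apply TensorProduct.ext'; intro a b
  set r := ℛ k a with hr
  set rb := ℛ k b with hrb
  set r2 : ∀ i : r.ι, Coalgebra.Repr k (r.left i) (H × H) := fun i => ℛ k (r.left i) with hr2
  set rb2 : ∀ j : rb.ι, Coalgebra.Repr k (rb.left j) (H × H) := fun j => ℛ k (rb.left j) with hrb2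
  set r3 : ∀ i (i2 : (r2 i).ι), Coalgebra.Repr k ((r2 i).left i2) (H × H) :=
    fun i i2 => ℛ k ((r2 i).left i2) with hr3
  set rb3 : ∀ j (j2 : (rb2 j).ι), Coalgebra.Repr k ((rb2 j).left j2) (H × H) :=
    fun j j2 => ℛ k ((rb2 j).left j2) with hrb3
  have e1 : CoalgebraStruct.comul (R := k) a
      = ∑ i ∈ r.index, r.left i ⊗ₜ[k] r.right i := r.eq.symm
  have e2 : ∀ i, CoalgebraStruct.comul (R := k) (r.left i)
      = ∑ i2 ∈ (r2 i).index, (r2 i).left i2 ⊗ₜ[k] (r2 i).right i2 := fun i => (r2 i).eq.symm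
  have hLHS : adjointTwist k H (a ⊗ₜ[k] b)
      = ∑ i ∈ r.index, ∑ i2 ∈ (r2 i).index,
          ((r2 i).left i2 * b * 𝑆 ((r2 i).right i2)) ⊗ₜ[k] r.right i := by
    simp only [adjointTwist, LinearMap.comp_apply, TensorProduct.map_tmul,
      LinearMap.id_coe, id_eq, e1, TensorProduct.sum_tmul, map_sum, e2,
      LinearEquiv.coe_coe, TensorProduct.assoc_tmul, TensorProduct.comm_tmul,
      TensorProduct.tensorTensorTensorComm_tmul, TensorProduct.assoc_symm_tmul,
      LinearMap.mul'_apply]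
  rw [hLHS, conv_tmul _ _ a b r rb]
  symm
  have hInner : ∀ i j (i2 : (r2 i).ι) (j2 : (rb2 j).ι),
      conv k (jL (k := k) ∘ₗ pL (k := k)) (jL (k := k) ∘ₗ pR (k := k))
          ((r2 i).left i2 ⊗ₜ[k] (rb2 j).left j2)
        = ((r2 i).left i2 * (rb2 j).left j2) ⊗ₜ[k] (1 : H) := by
    intro i j i2 j2
    rw [conv_tmul _ _ _ _ (r3 i i2) (rb3 j j2)]
    calc ∑ i3 ∈ (r3 i i2).index, ∑ j3 ∈ (rb3 j j2).index,
        (jL (k := k) ∘ₗ pL (k := k)) ((r3 i i2).left i3 ⊗ₜ[k] (rb3 j j2).left j3)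
          * (jL (k := k) ∘ₗ pR (k := k)) ((r3 i i2).right i3 ⊗ₜ[k] (rb3 j j2).right j3)
        = ∑ i3 ∈ (r3 i i2).index, ∑ j3 ∈ (rb3 j j2).index,
            (counit (R := k) ((r3 i i2).right i3) * counit (R := k) ((rb3 j j2).left j3)) •
              (((r3 i i2).left i3 * (rb3 j j2).right j3) ⊗ₜ[k] (1 : H)) := by
          refine Finset.sum_congr rfl fun i3 _ => Finset.sum_congr rfl fun j3 _ => ?_
          rw [atom1_tmul, atom2_tmul, smul_mul_smul_comm,
            Algebra.TensorProduct.tmul_mul_tmul, mul_one, mul_comm]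
      _ = ((r2 i).left i2 * (rb2 j).left j2) ⊗ₜ[k] (1 : H) := by
          rw [sum_mul_collapse, counit_smul_left (r3 i i2), counit_smul_right (rb3 j j2)]
  have hMid : ∀ i j,
      conv k (conv k (jL (k := k) ∘ₗ pL (k := k)) (jL (k := k) ∘ₗ pR (k := k)))
          (jL (k := k) ∘ₗ (𝑆 ∘ₗ pL (k := k))) (r.left i ⊗ₜ[k] rb.left j)
        = ∑ i2 ∈ (r2 i).index,
            ((r2 i).left i2 * rb.left j * 𝑆 ((r2 i).right i2)) ⊗ₜ[k] (1 : H) := by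
    intro i j
    rw [conv_tmul _ _ _ _ (r2 i) (rb2 j)]
    calc ∑ i2 ∈ (r2 i).index, ∑ j2 ∈ (rb2 j).index,
        conv k (jL (k := k) ∘ₗ pL (k := k)) (jL (k := k) ∘ₗ pR (k := k))
            ((r2 i).left i2 ⊗ₜ[k] (rb2 j).left j2)
          * (jL (k := k) ∘ₗ (𝑆 ∘ₗ pL (k := k))) ((r2 i).right i2 ⊗ₜ[k] (rb2 j).right j2)
        = ∑ i2 ∈ (r2 i).index, ∑ j2 ∈ (rb2 j).index,
            counit (R := k) ((rb2 j).right j2) •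
              (((r2 i).left i2 * (rb2 j).left j2 * 𝑆 ((r2 i).right i2)) ⊗ₜ[k] (1 : H)) := by
          refine Finset.sum_congr rfl fun i2 _ => Finset.sum_congr rfl fun j2 _ => ?_
          rw [hInner, atom3_tmul, mul_smul_comm, Algebra.TensorProduct.tmul_mul_tmul, mul_one]
      _ = ∑ i2 ∈ (r2 i).index,
            ((r2 i).left i2 * rb.left j * 𝑆 ((r2 i).right i2)) ⊗ₜ[k] (1 : H) := by
          refine Finset.sum_congr rfl fun i2 _ => ?_
          rw [sum_smul_mid, counit_smul_left (rb2 j)]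
  calc ∑ i ∈ r.index, ∑ j ∈ rb.index,
      conv k (conv k (jL (k := k) ∘ₗ pL (k := k)) (jL (k := k) ∘ₗ pR (k := k)))
          (jL (k := k) ∘ₗ (𝑆 ∘ₗ pL (k := k))) (r.left i ⊗ₜ[k] rb.left j)
        * (jR (k := k) ∘ₗ pL (k := k)) (r.right i ⊗ₜ[k] rb.right j)
      = ∑ i ∈ r.index, ∑ j ∈ rb.index, ∑ i2 ∈ (r2 i).index,
          counit (R := k) (rb.right j) •
            (((r2 i).left i2 * rb.left j * 𝑆 ((r2 i).right i2)) ⊗ₜ[k] r.right i) := by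
        refine Finset.sum_congr rfl fun i _ => Finset.sum_congr rfl fun j _ => ?_
        rw [hMid, atom4_tmul, Finset.sum_mul]
        refine Finset.sum_congr rfl fun i2 _ => ?_
        rw [mul_smul_comm, Algebra.TensorProduct.tmul_mul_tmul, one_mul, mul_one]
    _ = ∑ i ∈ r.index, ∑ i2 ∈ (r2 i).index,
          ((r2 i).left i2 * b * 𝑆 ((r2 i).right i2)) ⊗ₜ[k] r.right i := by
        refine Finset.sum_congr rfl fun i _ => ?_
        rw [Finset.sum_comm]
        refine Finset.sum_congr rfl fun i2 _ => ?_
        rw [sum_smul_mid, counit_smul_left rb]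
end MainAux

noncomputable section Assembly
universe u
open Coalgebra
variable {k : Type u} [Field k] {H : Type u} [Ring H] [HopfAlgebra k H]

local notation "𝑆" => (HopfAlgebra.antipode (R := k) (A := H))

lemma commute_ι21 (f g : H ⊗[k] H →ₗ[k] H ⊗[k] H) (x y : H ⊗[k] H) :
    Commute ((jR (k := k) ∘ₗ f) x) ((jL (k := k) ∘ₗ g) y) :=
  (commute_jL_jR (g y) (f x)).symm

lemma comul_comp_adjointTwist (hcc : IsCocommutative k H) :
    (Coalgebra.comul : H ⊗[k] H →ₗ[k] (H ⊗[k] H) ⊗[k] (H ⊗[k] H)) ∘ₗ adjointTwist k H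
      = TensorProduct.map (adjointTwist k H) (adjointTwist k H) ∘ₗ Coalgebra.comul := by
  have hccM : (TensorProduct.comm k (H ⊗[k] H) (H ⊗[k] H)).toLinearMap ∘ₗ Coalgebra.comul
      = (Coalgebra.comul : H ⊗[k] H →ₗ[k] (H ⊗[k] H) ⊗[k] (H ⊗[k] H)) :=
    comm_comp_comul_tensor hcc
  have hm : ∀ x y : H ⊗[k] H, Coalgebra.comul (R := k) (x * y) = comul x * comul y :=
    fun x y => Bialgebra.comul_mul x y
  set A1 : H ⊗[k] H →ₗ[k] H ⊗[k] H := jL (k := k) ∘ₗ pL (k := k) with hA1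
  set A2 : H ⊗[k] H →ₗ[k] H ⊗[k] H := jL (k := k) ∘ₗ pR (k := k) with hA2
  set A3 : H ⊗[k] H →ₗ[k] H ⊗[k] H := jL (k := k) ∘ₗ (𝑆 ∘ₗ pL (k := k)) with hA3
  set A4 : H ⊗[k] H →ₗ[k] H ⊗[k] H := jR (k := k) ∘ₗ pL (k := k) with hA4
  rw [adjointTwist_eq_conv (k := k) (H := H), map_comp_comul_eq_conv]
  rw [comp_conv _ hm, comp_conv _ hm, comp_conv _ hm]
  rw [comp_conv (jL (k := k)) jL_mul, comp_conv (jL (k := k)) jL_mul,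
    comp_conv (jL (k := k)) jL_mul]
  rw [comp_conv (jR (k := k)) jR_mul, comp_conv (jR (k := k)) jR_mul,
    comp_conv (jR (k := k)) jR_mul]
  have c1 : Coalgebra.comul ∘ₗ A1
      = conv k (jL (k := k) ∘ₗ A1) (jR (k := k) ∘ₗ A1) := by
    rw [hA1, ← LinearMap.comp_assoc, comul_comp_jL, conv_comp _ _ (pL (k := k) (C := H)) (comul_comp_pL (k := k) (C := H)),
      LinearMap.comp_assoc, LinearMap.comp_assoc]
  have c2 : Coalgebra.comul ∘ₗ A2
      = conv k (jL (k := k) ∘ₗ A2) (jR (k := k) ∘ₗ A2) := by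
    rw [hA2, ← LinearMap.comp_assoc, comul_comp_jL, conv_comp _ _ (pR (k := k) (C := H)) (comul_comp_pR (k := k) (C := H)),
      LinearMap.comp_assoc, LinearMap.comp_assoc]
  have c3 : Coalgebra.comul ∘ₗ A3
      = conv k (jL (k := k) ∘ₗ A3) (jR (k := k) ∘ₗ A3) := by
    rw [hA3, ← LinearMap.comp_assoc, ← LinearMap.comp_assoc, comul_comp_jL,
      conv_comp _ _ _ (comul_comp_antipode hcc), conv_comp _ _ (pL (k := k) (C := H)) (comul_comp_pL (k := k) (C := H))]
    simp only [LinearMap.comp_assoc]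
  have c4 : Coalgebra.comul ∘ₗ A4
      = conv k (jL (k := k) ∘ₗ A4) (jR (k := k) ∘ₗ A4) := by
    rw [hA4, ← LinearMap.comp_assoc, comul_comp_jR, conv_comp _ _ (pL (k := k) (C := H)) (comul_comp_pL (k := k) (C := H)),
      LinearMap.comp_assoc, LinearMap.comp_assoc]
  rw [c1, c2, c3, c4]
  have ex1 : conv k (conv k (jL (k := k) ∘ₗ A1) (jR (k := k) ∘ₗ A1))
        (conv k (jL (k := k) ∘ₗ A2) (jR (k := k) ∘ₗ A2))
      = conv k (conv k (jL (k := k) ∘ₗ A1) (jL (k := k) ∘ₗ A2))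
        (conv k (jR (k := k) ∘ₗ A1) (jR (k := k) ∘ₗ A2)) :=
    conv_exchange hccM _ _ _ _ (commute_ι21 A1 A2)
  have ex2 : conv k (conv k (conv k (jL (k := k) ∘ₗ A1) (jL (k := k) ∘ₗ A2))
        (conv k (jR (k := k) ∘ₗ A1) (jR (k := k) ∘ₗ A2)))
        (conv k (jL (k := k) ∘ₗ A3) (jR (k := k) ∘ₗ A3))
      = conv k (conv k (conv k (jL (k := k) ∘ₗ A1) (jL (k := k) ∘ₗ A2)) (jL (k := k) ∘ₗ A3))
        (conv k (conv k (jR (k := k) ∘ₗ A1) (jR (k := k) ∘ₗ A2)) (jR (k := k) ∘ₗ A3)) :=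
    conv_exchange hccM _ _ _ _
      (commute_conv_left (commute_ι21 A1 A3) (commute_ι21 A2 A3))
  have ex3 : conv k (conv k (conv k (conv k (jL (k := k) ∘ₗ A1) (jL (k := k) ∘ₗ A2))
          (jL (k := k) ∘ₗ A3))
        (conv k (conv k (jR (k := k) ∘ₗ A1) (jR (k := k) ∘ₗ A2)) (jR (k := k) ∘ₗ A3)))
        (conv k (jL (k := k) ∘ₗ A4) (jR (k := k) ∘ₗ A4))
      = conv k (conv k (conv k (conv k (jL (k := k) ∘ₗ A1) (jL (k := k) ∘ₗ A2))
          (jL (k := k) ∘ₗ A3)) (jL (k := k) ∘ₗ A4))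
        (conv k (conv k (conv k (jR (k := k) ∘ₗ A1) (jR (k := k) ∘ₗ A2)) (jR (k := k) ∘ₗ A3))
          (jR (k := k) ∘ₗ A4)) :=
    conv_exchange hccM _ _ _ _
      (commute_conv_left
        (commute_conv_left (commute_ι21 A1 A4) (commute_ι21 A2 A4))
        (commute_ι21 A3 A4))
  rw [ex1, ex2, ex3]

end Assembly



/-- Let `H` be a cocommutative Hopf algebra over a field `k` and `A` a
`k`-algebra.  If `α, β : H ⊗ H → A` are equivariant linear maps (i.e.
`α(a ⊗ b) = α(a₁ b S(a₂) ⊗ a₃)`, and similarly for `β`), then their convolution product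
`α ∗ β` is equivariant. -/
theorem conv_isEquivariant
    (k : Type u) [Field k] (H : Type u) [Ring H] [HopfAlgebra k H]
    (A : Type u) [Ring A] [Algebra k A]
    (hcc : IsCocommutative k H) (α β : H ⊗[k] H →ₗ[k] A)
    (hα : IsEquivariant k H α) (hβ : IsEquivariant k H β) :
    IsEquivariant k H (conv k α β) := by
  unfold IsEquivariant at hα hβ ⊢
  rw [conv_comp α β (adjointTwist k H) (comul_comp_adjointTwist hcc), hα, hβ]
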